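/- arXiv:2604.14102 — 7 statements merged into one kernel-verified Lean document; each statement's English description precedes it below -/
import Mathlib

section
/- No separable infinite-dimensional Banach space has the perfect Daugavet property. (Consequence: if X has the perfect Daugavet property, then X is not separable.) -/
universe u

/-- A slice of the closed unit ball of `X`. -/
def ballSlice {X : Type u} [NormedAddCommGroup X] [NormedSpace ℝ X]
    (f : X →L[ℝ] ℝ) (a : ℝ) : Set X :=
  {x | ‖x‖ ≤ 1 ∧ ‖f‖ - a < f x}

/-- The perfect Daugavet property. -/
def HasPerfectDaugavetProp (X : Type u) [NormedAddCommGroup X] [NormedSpace ℝ X] : Prop :=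
  ∀ y : X, ‖y‖ = 1 →
    ∀ (f : X →L[ℝ] ℝ) (a : ℝ), 0 < a →
      ∃ x ∈ ballSlice f a, ‖y + x‖ = 2

section Aux

variable {X : Type*} [NormedAddCommGroup X] [NormedSpace ℝ X]

/-- The set of points where the second difference of the norm in direction `v`
can be made smaller than `t/(k+1)` is dense. -/
lemma gsmooth_dense (v : X) (k : ℕ) :
    Dense {y : X | ∃ t > (0:ℝ), ‖y + t • v‖ + ‖y - t • v‖ - 2 * ‖y‖ < t / (k + 1)} := by
  rw [Metric.dense_iff]
  intro y₀ r hr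
  obtain ⟨N, hN⟩ := exists_nat_gt (2 * ‖v‖ * (k + 1))
  have hN0 : (0:ℝ) < N := lt_of_le_of_lt (by positivity) hN
  set t₀ : ℝ := r / ((N + 2) * ‖v‖ + 1) with ht₀def
  have hden : (0:ℝ) < (N + 2) * ‖v‖ + 1 := by positivity
  have ht₀ : 0 < t₀ := div_pos hr hden
  set ψ : ℕ → ℝ := fun j => ‖y₀ + ((j : ℝ) * t₀) • v‖ with hψdef
  -- each consecutive difference is bounded by t₀ * ‖v‖
  have hdiff : ∀ j : ℕ, |ψ (j + 1) - ψ j| ≤ t₀ * ‖v‖ := by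
    intro j
    have h1 : y₀ + (((j:ℕ)+1 : ℝ) * t₀) • v = (y₀ + ((j : ℝ) * t₀) • v) + t₀ • v := by
      rw [add_assoc, ← add_smul]; ring_nf
    have := abs_norm_sub_norm_le ((y₀ + ((j : ℝ) * t₀) • v) + t₀ • v) (y₀ + ((j : ℝ) * t₀) • v)
    simp only [add_sub_cancel_left] at this
    calc |ψ (j + 1) - ψ j| = |‖(y₀ + ((j : ℝ) * t₀) • v) + t₀ • v‖ - ψ j| := by
          rw [hψdef]; push_cast [h1]; ring_nf
      _ ≤ ‖t₀ • v‖ := this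
      _ = t₀ * ‖v‖ := by rw [norm_smul, Real.norm_of_nonneg ht₀.le]
  -- pigeonhole: some second difference is small
  have hpigeon : ∃ j < N, ψ (j + 2) + ψ j - 2 * ψ (j + 1) < t₀ / (k + 1) := by
    by_contra hcon
    push_neg at hcon
    have hstep : ∀ m ≤ N, ψ 1 - ψ 0 + m * (t₀ / (k + 1)) ≤ ψ (m + 1) - ψ m := by
      intro m
      induction m with
      | zero => simp
      | succ n ih =>
        intro hn
        have h1 := ih (le_of_lt (Nat.lt_of_succ_le hn))
        have h2 := hcon n (Nat.lt_of_succ_le hn)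
        push_cast
        push_cast at h1
        nlinarith
    have hNstep := hstep N le_rfl
    have b1 := hdiff N
    have b2 := hdiff 0
    rw [abs_le] at b1 b2
    have hNbound : (N:ℝ) * (t₀ / (k + 1)) ≤ 2 * (t₀ * ‖v‖) := by linarith [b1.2, b2.1]
    have : (N:ℝ) ≤ 2 * ‖v‖ * (k + 1) := by
      have hk : (0:ℝ) < (k:ℝ) + 1 := by positivity
      rw [div_eq_mul_inv] at hNbound
      have := mul_le_mul_of_nonneg_right hNbound (le_of_lt hk)
      rw [mul_assoc, mul_assoc, inv_mul_cancel₀ (ne_of_gt hk)] at this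
      have h3 : (N:ℝ) * t₀ ≤ 2 * (t₀ * ‖v‖) * ((k:ℝ)+1) := by linarith [this]
      nlinarith [ht₀]
    linarith
  obtain ⟨j, hjN, hj⟩ := hpigeon
  refine ⟨y₀ + (((j:ℝ) + 1) * t₀) • v, ?_, t₀, ht₀, ?_⟩
  · rw [Metric.mem_ball, dist_eq_norm]
    have : y₀ + (((j:ℝ) + 1) * t₀) • v - y₀ = (((j:ℝ) + 1) * t₀) • v := by abel
    rw [this, norm_smul, Real.norm_of_nonneg (by positivity)]
    have hj1 : ((j:ℝ) + 1) ≤ N := by exact_mod_cast Nat.succ_le_of_lt hjN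
    calc ((j:ℝ) + 1) * t₀ * ‖v‖ ≤ (N:ℝ) * t₀ * ‖v‖ := by
          apply mul_le_mul_of_nonneg_right (mul_le_mul_of_nonneg_right hj1 ht₀.le) (norm_nonneg v)
      _ < ((N + 2) * ‖v‖ + 1) * t₀ := by nlinarith [norm_nonneg v, ht₀]
      _ = r := by rw [ht₀def]; field_simp
  · have e1 : y₀ + (((j:ℝ) + 1) * t₀) • v + t₀ • v = y₀ + (((j:ℕ) + 2 : ℝ) * t₀) • v := by
      rw [add_assoc, ← add_smul]; ring_nf
    have e2 : y₀ + (((j:ℝ) + 1) * t₀) • v - t₀ • v = y₀ + ((j : ℝ) * t₀) • v := by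
      rw [add_sub_assoc, ← sub_smul]; ring_nf
    rw [e1, e2]
    have h5 : ψ (j + 2) + ψ j - 2 * ψ (j + 1) < t₀ / (k + 1) := hj
    rw [hψdef] at h5
    push_cast at h5 ⊢
    convert h5 using 3


end Aux

/-- No separable infinite-dimensional Banach space has the perfect Daugavet property. -/
theorem no_separable_perfect_daugavet (X : Type u) [NormedAddCommGroup X]
    [NormedSpace ℝ X] [CompleteSpace X] [TopologicalSpace.SeparableSpace X]
    (hinf : ¬ FiniteDimensional ℝ X) :
    ¬ HasPerfectDaugavetProp X := by
  intro hP
  -- X is nontrivial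
  have hnt : Nontrivial X := by
    by_contra hn
    rw [not_nontrivial_iff_subsingleton] at hn
    exact hinf (Module.Finite.of_basis (Module.Basis.empty _ : Module.Basis Empty ℝ X))
  -- dense sequence
  set u : ℕ → X := TopologicalSpace.denseSeq X with hu
  have hur : DenseRange u := TopologicalSpace.denseRange_denseSeq X
  -- the Baire sets
  set S : ℕ × ℕ → Set X := fun p =>
    {y : X | ∃ t > (0:ℝ), ‖y + t • u p.1‖ + ‖y - t • u p.1‖ - 2 * ‖y‖ < t / (p.2 + 1)} with hS
  have hSopen : ∀ p, IsOpen (S p) := by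
    intro p
    have : S p = ⋃ (t : ℝ) (_ : 0 < t),
        {y : X | ‖y + t • u p.1‖ + ‖y - t • u p.1‖ - 2 * ‖y‖ < t / (p.2 + 1)} := by
      ext y; simp [hS, Set.mem_iUnion]
    rw [this]
    apply isOpen_iUnion; intro t; apply isOpen_iUnion; intro _
    apply isOpen_lt
    · exact Continuous.sub (Continuous.add (by fun_prop) (by fun_prop)) (by fun_prop)
    · exact continuous_const
  have hSdense : ∀ p, Dense (S p) := fun p => gsmooth_dense (u p.1) p.2
  have hdense : Dense (⋂ p, S p) := dense_iInter_of_isOpen hSopen hSdense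
  -- pick a smooth point
  obtain ⟨x₀, hx₀⟩ := exists_ne (0 : X)
  obtain ⟨z, hzball, hzmem⟩ := Metric.dense_iff.mp hdense x₀ ‖x₀‖ (norm_pos_iff.mpr hx₀)
  have hz0 : z ≠ 0 := by
    intro h
    rw [Metric.mem_ball, h, dist_zero_left] at hzball
    exact lt_irrefl _ hzball
  have hznorm : 0 < ‖z‖ := norm_pos_iff.mpr hz0
  set y : X := ‖z‖⁻¹ • z with hy
  have hynorm : ‖y‖ = 1 := by
    rw [hy, norm_smul, Real.norm_of_nonneg (by positivity), inv_mul_cancel₀ (ne_of_gt hznorm)]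
  have hzy : z = ‖z‖ • y := by rw [hy, smul_inv_smul₀ (ne_of_gt hznorm)]
  -- uniqueness of norming functionals at y
  have huniq : ∀ g h : X →L[ℝ] ℝ, ‖g‖ ≤ 1 → ‖h‖ ≤ 1 → g y = 1 → h y = 1 → g = h := by
    have key : ∀ g h : X →L[ℝ] ℝ, ‖g‖ ≤ 1 → ‖h‖ ≤ 1 → g y = 1 → h y = 1 →
        ∀ w : X, g w ≤ h w := by
      intro g h hg hh hgy hhy w
      have hgz : g z = ‖z‖ := by nth_rewrite 1 [hzy]; rw [map_smul, smul_eq_mul, hgy, mul_one]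
      have hhz : h z = ‖z‖ := by nth_rewrite 1 [hzy]; rw [map_smul, smul_eq_mul, hhy, mul_one]
      have hn : ∀ n : ℕ, g (u n) ≤ h (u n) := by
        intro n
        by_contra hc
        push_neg at hc
        obtain ⟨k, hk⟩ := exists_nat_one_div_lt (sub_pos.mpr hc)
        have hzS := Set.mem_iInter.mp hzmem (n, k)
        obtain ⟨t, ht, hlt⟩ := hzS
        have h1 : g z + t * g (u n) ≤ ‖z + t • u n‖ := by
          have := g.le_opNorm (z + t • u n)
          have h2 : g (z + t • u n) ≤ ‖z + t • u n‖ := by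
            calc g (z + t • u n) ≤ |g (z + t • u n)| := le_abs_self _
              _ ≤ ‖g‖ * ‖z + t • u n‖ := by exact_mod_cast g.le_opNorm _
              _ ≤ 1 * ‖z + t • u n‖ := by
                  apply mul_le_mul_of_nonneg_right hg (norm_nonneg _)
              _ = ‖z + t • u n‖ := one_mul _
          simpa [map_add, map_smul, smul_eq_mul] using h2
        have h2 : h z - t * h (u n) ≤ ‖z - t • u n‖ := by
          have h2' : h (z - t • u n) ≤ ‖z - t • u n‖ := by
            calc h (z - t • u n) ≤ |h (z - t • u n)| := le_abs_self _
              _ ≤ ‖h‖ * ‖z - t • u n‖ := by exact_mod_cast h.le_opNorm _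
              _ ≤ 1 * ‖z - t • u n‖ := by
                  apply mul_le_mul_of_nonneg_right hh (norm_nonneg _)
              _ = ‖z - t • u n‖ := one_mul _
          simpa [map_sub, map_smul, smul_eq_mul] using h2'
        -- combine
        have hzz : ‖z‖ = g z := hgz.symm
        have : t * (g (u n) - h (u n)) < t / (k + 1) := by
          have := hlt
          rw [hgz] at h1
          rw [hhz] at h2
          nlinarith
        have h4 : g (u n) - h (u n) < 1 / (k + 1) := by
          rw [div_eq_mul_inv] at this ⊢
          have := (mul_lt_mul_iff_right₀ ht).mp (by linarith [this] : t * (g (u n) - h (u n)) < t * ((k:ℝ)+1)⁻¹)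
          linarith [this]
        linarith
      -- closed set argument
      have hclosed : IsClosed {w : X | g w ≤ h w} :=
        isClosed_le g.continuous h.continuous
      have hsub : Set.range u ⊆ {w : X | g w ≤ h w} := by
        rintro _ ⟨n, rfl⟩; exact hn n
      have : closure (Set.range u) ⊆ {w : X | g w ≤ h w} :=
        hclosed.closure_subset_iff.mpr hsub
      rw [hur.closure_range] at this
      exact this (Set.mem_univ w)
    intro g h hg hh hgy hhy
    ext w
    exact le_antisymm (key g h hg hh hgy hhy w) (key h g hh hg hhy hgy w)
  -- get a norming functional
  have hy0 : y ≠ 0 := by intro h; rw [h, norm_zero] at hynorm; norm_num at hynorm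
  obtain ⟨g, hgnorm, hgy⟩ := exists_dual_vector ℝ y (norm_ne_zero_iff.mpr hy0)
  rw [hynorm] at hgy
  have hgy : g y = 1 := by exact_mod_cast hgy
  -- apply perfect Daugavet with the slice of -g
  obtain ⟨x, hxslice, hxsum⟩ := hP y hynorm (-g) 1 one_pos
  obtain ⟨hxball, hxval⟩ := hxslice
  rw [norm_neg, hgnorm] at hxval
  simp only [ContinuousLinearMap.neg_apply] at hxval
  have hgx : g x < 0 := by linarith
  -- the sum is normed by some functional
  have hyx0 : y + x ≠ 0 := by
    intro h; rw [h, norm_zero] at hxsum; norm_num at hxsum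
  obtain ⟨f, hfnorm, hfyx⟩ := exists_dual_vector ℝ (y + x) (norm_ne_zero_iff.mpr hyx0)
  rw [hxsum] at hfyx
  have hfyx : f (y + x) = 2 := by exact_mod_cast hfyx
  have hfy : f y ≤ 1 := by
    calc f y ≤ |f y| := le_abs_self _
      _ ≤ ‖f‖ * ‖y‖ := by exact_mod_cast f.le_opNorm _
      _ = 1 := by rw [hfnorm, hynorm, one_mul]
  have hfx : f x ≤ 1 := by
    calc f x ≤ |f x| := le_abs_self _
      _ ≤ ‖f‖ * ‖x‖ := by exact_mod_cast f.le_opNorm _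
      _ ≤ 1 := by rw [hfnorm, one_mul]; exact hxball
  have hfsum : f y + f x = 2 := by
    have : f (y + x) = f y + f x := map_add f y x
    rw [← this, hfyx]
  have hfy1 : f y = 1 := by linarith
  have hfg : f = g := huniq f g (le_of_eq hfnorm) (le_of_eq hgnorm) hfy1 hgy
  rw [hfg] at hfsum
  rw [hgy] at hfsum
  linarith
end

section
/- Let K be a compact Hausdorff space and let 𝔯(K) (the reaping number of K) be the least cardinality of a family ℱ of nonempty open subsets of K such that for every pair of disjoint closed sets L₁, L₂ there is W ∈ ℱ with W ∩ L₁ = ∅ or W ∩ L₂ = ∅. Then 𝔯(K) equals the least cardinality of a family ℱ of nonempty open sets such that for every three pairwise disjoint closed sets L₁, L₂, L₃ there exists W ∈ ℱ with W ∩ L_i = ∅ for some i ∈ {1,2,3}. -/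
/-!
A pair-reaping family reaps triples. Conversely, let `F` reap triples. If `F` fails to reap some
disjoint closed `L₁, L₂`, every member of `F` meets both; separate them by disjoint open sets
`U ⊇ L₁`, `V ⊇ L₂`. Then `{W ∩ U | W ∈ F}` reaps pairs: for disjoint closed `M₁, M₂`, some
`W ∈ F` misses one of `M₁ \ V`, `M₂ \ V`, `L₂`, necessarily not `L₂`, and since `U ∩ V = ∅`,
missing `Mᵢ \ V` makes `W ∩ U` miss `Mᵢ`. Hence the two least cardinalities agree.
-/

universe u

/-- A reaping family in a topological space `K`: a family of nonempty open sets such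
that every pair of disjoint closed sets is "reaped" by a member of the family. -/
def IsReapingFamily {K : Type u} [TopologicalSpace K] (F : Set (Set K)) : Prop :=
  (∀ W ∈ F, IsOpen W ∧ W.Nonempty) ∧
    ∀ L₁ L₂ : Set K, IsClosed L₁ → IsClosed L₂ → Disjoint L₁ L₂ →
      ∃ W ∈ F, W ∩ L₁ = ∅ ∨ W ∩ L₂ = ∅

/-- The reaping number `𝔯(K)`: the least cardinality of a reaping family in `K`. -/
noncomputable def reapingNumber (K : Type u) [TopologicalSpace K] : Cardinal.{u} :=
  ⨅ F : {F : Set (Set K) // IsReapingFamily F}, Cardinal.mk F.1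

open Set Cardinal

section Infimum

variable {ι α : Type*} [ConditionallyCompleteLattice α] [OrderBot α] {P Q : ι → Prop} {f : ι → α}

theorem ciInf_subtype_le_of_forall_exists_le [Nonempty {i // P i}]
    (h : ∀ i, P i → ∃ j, Q j ∧ f j ≤ f i) :
    ⨅ j : {j // Q j}, f j ≤ ⨅ i : {i // P i}, f i :=
  le_ciInf fun ⟨i, hi⟩ =>
    let ⟨j, hj, hji⟩ := h i hi
    ciInf_le_of_le (OrderBot.bddBelow _) ⟨j, hj⟩ hji

theorem ciInf_subtype_eq_of_forall_exists_le (hPQ : ∀ i, P i → ∃ j, Q j ∧ f j ≤ f i)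
    (hQP : ∀ j, Q j → ∃ i, P i ∧ f i ≤ f j) :
    ⨅ i : {i // P i}, f i = ⨅ j : {j // Q j}, f j := by
  rcases isEmpty_or_nonempty {i // P i} with hP | hP
  · have : IsEmpty {j // Q j} :=
      ⟨fun ⟨j, hj⟩ => let ⟨i, hi, _⟩ := hQP j hj; hP.false ⟨i, hi⟩⟩
    rw [iInf_of_isEmpty, iInf_of_isEmpty]
  · have : Nonempty {j // Q j} :=
      let ⟨i, hi⟩ := hP; let ⟨j, hj, _⟩ := hPQ i hi; ⟨⟨j, hj⟩⟩
    exact le_antisymm (ciInf_subtype_le_of_forall_exists_le hQP)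
      (ciInf_subtype_le_of_forall_exists_le hPQ)

end Infimum

section Reaping

variable {K : Type u} [TopologicalSpace K] {F : Set (Set K)}

def IsTripleReapingFamily (F : Set (Set K)) : Prop :=
  (∀ W ∈ F, IsOpen W ∧ W.Nonempty) ∧
    ∀ L₁ L₂ L₃ : Set K, IsClosed L₁ → IsClosed L₂ → IsClosed L₃ →
      Disjoint L₁ L₂ → Disjoint L₁ L₃ → Disjoint L₂ L₃ →
      ∃ W ∈ F, W ∩ L₁ = ∅ ∨ W ∩ L₂ = ∅ ∨ W ∩ L₃ = ∅

theorem IsReapingFamily.isTripleReapingFamily (hF : IsReapingFamily F) :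
    IsTripleReapingFamily F := by
  refine ⟨hF.1, fun L₁ L₂ _ h₁ h₂ _ h₁₂ _ _ => ?_⟩
  obtain ⟨W, hW, hreap⟩ := hF.2 L₁ L₂ h₁ h₂ h₁₂
  exact ⟨W, hW, hreap.imp_right Or.inl⟩

theorem IsTripleReapingFamily.isReapingFamily_image_inter (hF : IsTripleReapingFamily F)
    {U V L : Set K} (hU : IsOpen U) (hV : IsOpen V) (hL : IsClosed L) (hUV : Disjoint U V)
    (hLV : L ⊆ V) (hFU : ∀ W ∈ F, (W ∩ U).Nonempty) (hFL : ∀ W ∈ F, (W ∩ L).Nonempty) :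
    IsReapingFamily ((· ∩ U) '' F) := by
  refine ⟨?_, fun M₁ M₂ hM₁ hM₂ hM => ?_⟩
  · rintro _ ⟨W, hW, rfl⟩
    exact ⟨(hF.1 W hW).1.inter hU, hFU W hW⟩
  obtain ⟨W, hW, hreap⟩ := hF.2 (M₁ \ V) (M₂ \ V) L (hM₁.sdiff hV) (hM₂.sdiff hV) hL
    (hM.mono sdiff_subset sdiff_subset) (disjoint_sdiff_left.mono_right hLV)
    (disjoint_sdiff_left.mono_right hLV)
  have hmiss : ∀ M : Set K, W ∩ (M \ V) = ∅ → W ∩ U ∩ M = ∅ := fun M hWM =>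
    subset_empty_iff.mp <| hWM ▸ fun x ⟨⟨hxW, hxU⟩, hxM⟩ =>
      ⟨hxW, hxM, disjoint_left.mp hUV hxU⟩
  refine ⟨W ∩ U, mem_image_of_mem _ hW, ?_⟩
  rcases hreap with h₁ | h₂ | hWL
  · exact Or.inl (hmiss M₁ h₁)
  · exact Or.inr (hmiss M₂ h₂)
  · exact absurd hWL (hFL W hW).ne_empty

theorem IsTripleReapingFamily.exists_isReapingFamily_mk_le [NormalSpace K]
    (hF : IsTripleReapingFamily F) : ∃ G : Set (Set K), IsReapingFamily G ∧ #G ≤ #F := by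
  by_cases hreap : IsReapingFamily F
  · exact ⟨F, hreap, le_rfl⟩
  have hunreaped : ¬ ∀ L₁ L₂ : Set K, IsClosed L₁ → IsClosed L₂ → Disjoint L₁ L₂ →
      ∃ W ∈ F, W ∩ L₁ = ∅ ∨ W ∩ L₂ = ∅ := fun h => hreap ⟨hF.1, h⟩
  push Not at hunreaped
  obtain ⟨L₁, L₂, hL₁, hL₂, hL, hFL⟩ := hunreaped
  obtain ⟨U, V, hU, hV, hL₁U, hL₂V, hUV⟩ := normal_separation hL₁ hL₂ hL
  refine ⟨_, hF.isReapingFamily_image_inter hU hV hL₂ hUV hL₂V ?_ fun W hW => (hFL W hW).2,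
    mk_image_le⟩
  exact fun W hW => (hFL W hW).1.mono (inter_subset_inter_right W hL₁U)

end Reaping

/-- The reaping number of a compact Hausdorff space equals the least cardinality of a
family of nonempty open sets reaping every triple of pairwise disjoint closed sets. -/
theorem reapingNumber_eq_three_sets (K : Type u) [TopologicalSpace K] [CompactSpace K]
    [T2Space K] :
    reapingNumber K =
      ⨅ F : {F : Set (Set K) //
        (∀ W ∈ F, IsOpen W ∧ W.Nonempty) ∧
          ∀ L₁ L₂ L₃ : Set K, IsClosed L₁ → IsClosed L₂ → IsClosed L₃ →
            Disjoint L₁ L₂ → Disjoint L₁ L₃ → Disjoint L₂ L₃ →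
            ∃ W ∈ F, W ∩ L₁ = ∅ ∨ W ∩ L₂ = ∅ ∨ W ∩ L₃ = ∅}, Cardinal.mk F.1 :=
  ciInf_subtype_eq_of_forall_exists_le (f := fun F : Set (Set K) => #F)
    (fun F hF => ⟨F, hF.isTripleReapingFamily, le_rfl⟩)
    (fun _ hF => IsTripleReapingFamily.exists_isReapingFamily_mk_le hF)
end

section
/- Let {K_i : i < κ} be an infinite family of κ many compact Hausdorff spaces each with more than one point, and K = ∏_{i<κ} K_i. Then 𝔯(K) ≥ max(κ, sup_{i<κ} 𝔯(K_i)). -/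
/-!
A member `W` of a reaping family of the product reaps the two fibres `{x | x i = a}` and
`{x | x i = b}` only if the coordinate `i` is one of the finitely many coordinates
restricted by a basic box inside `W`. Fewer than `κ` members restrict fewer than `κ`
coordinates, so some pair of fibres is not reaped. The bound by `𝔯(K_i)` holds because the
projections are continuous open maps, and these carry reaping families to reaping families.
-/

universe u

open Set
open Cardinal hiding univ

section ReapingFamily

variable {X Y : Type u} [TopologicalSpace X] [TopologicalSpace Y]

theorem isReapingFamily_setOf_isOpen_nonempty [Nonempty X] :
    IsReapingFamily {W : Set X | IsOpen W ∧ W.Nonempty} := by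
  refine ⟨fun W hW => hW, fun L₁ L₂ h₁ _ hd => ?_⟩
  by_cases hL₁ : L₁ = univ
  · subst hL₁
    refine ⟨univ, ⟨isOpen_univ, univ_nonempty⟩, Or.inr ?_⟩
    rw [univ_inter, ← univ_disjoint]
    exact hd
  · exact ⟨L₁ᶜ, ⟨h₁.isOpen_compl, nonempty_compl.mpr hL₁⟩,
      Or.inl (compl_inter_self L₁)⟩

theorem reapingNumber_le_mk {F : Set (Set X)} (hF : IsReapingFamily F) :
    reapingNumber X ≤ #F :=
  ciInf_le' (fun F : {F : Set (Set X) // IsReapingFamily F} => #F.1) ⟨F, hF⟩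

theorem le_reapingNumber [Nonempty X] {c : Cardinal.{u}}
    (h : ∀ F : Set (Set X), IsReapingFamily F → c ≤ #F) : c ≤ reapingNumber X :=
  haveI : Nonempty {F : Set (Set X) // IsReapingFamily F} :=
    ⟨⟨_, isReapingFamily_setOf_isOpen_nonempty⟩⟩
  le_ciInf fun F => h F.1 F.2

theorem IsReapingFamily.image {f : X → Y} (hf : Continuous f) (hfo : IsOpenMap f)
    {F : Set (Set X)} (hF : IsReapingFamily F) : IsReapingFamily ((f '' ·) '' F) := by
  refine ⟨?_, fun L₁ L₂ h₁ h₂ hd => ?_⟩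
  · rintro _ ⟨W, hW, rfl⟩
    exact ⟨hfo W (hF.1 W hW).1, (hF.1 W hW).2.image f⟩
  · obtain ⟨W, hW, hreap⟩ :=
      hF.2 _ _ (h₁.preimage hf) (h₂.preimage hf) (hd.preimage f)
    refine ⟨f '' W, mem_image_of_mem _ hW, ?_⟩
    simp only [← image_inter_preimage, image_eq_empty]
    exact hreap

theorem reapingNumber_le_of_isOpenMap [Nonempty X] {f : X → Y} (hf : Continuous f)
    (hfo : IsOpenMap f) : reapingNumber Y ≤ reapingNumber X :=
  le_reapingNumber fun _ hF => (reapingNumber_le_mk (hF.image hf hfo)).trans mk_image_le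

end ReapingFamily

theorem exists_forall_notMem_of_mk_lt {α ι : Type u} [Infinite ι] (s : α → Finset ι)
    (h : #α < #ι) : ∃ i, ∀ a, i ∉ s a := by
  suffices hlt : #(⋃ a, (s a : Set ι)) < #ι by
    obtain ⟨i, hi⟩ := (ne_univ_iff_exists_notMem (⋃ a, (s a : Set ι))).mp fun hu => by
      rw [hu, mk_univ] at hlt
      exact hlt.false
    exact ⟨i, fun a ha => hi (mem_iUnion.mpr ⟨a, ha⟩)⟩
  rcases finite_or_infinite α with hα | hα
  · exact (lt_aleph0_of_finite _).trans_le (aleph0_le_mk ι)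
  · have hsup : ⨆ a, #(s a : Set ι) ≤ #α :=
      (ciSup_le' fun a => (lt_aleph0_of_finite _).le).trans (aleph0_le_mk α)
    calc #(⋃ a, (s a : Set ι)) ≤ #α * ⨆ a, #(s a : Set ι) := mk_iUnion_le _
      _ ≤ #α := (mul_le_max_of_aleph0_le_left (aleph0_le_mk α)).trans (max_le le_rfl hsup)
      _ < #ι := h

theorem IsOpen.exists_finset_forall_eqOn_mem {ι : Type u} {π : ι → Type u}
    [∀ i, TopologicalSpace (π i)] {W : Set (∀ i, π i)} (hW : IsOpen W) {x : ∀ i, π i}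
    (hx : x ∈ W) : ∃ I : Finset ι, ∀ y, (∀ i ∈ I, y i = x i) → y ∈ W := by
  obtain ⟨I, u, hu, hsub⟩ := isOpen_pi_iff.mp hW x hx
  exact ⟨I, fun y hy => hsub fun i hi => hy i hi ▸ (hu i hi).2⟩

theorem mk_le_of_isReapingFamily_pi {ι : Type u} [Infinite ι] {K : ι → Type u}
    [∀ i, TopologicalSpace (K i)] [∀ i, T1Space (K i)] [∀ i, Nontrivial (K i)]
    {F : Set (Set (∀ i, K i))} (hF : IsReapingFamily F) : #ι ≤ #F := by
  classical
  by_contra! hlt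
  have hbox : ∀ W : F, ∃ x ∈ W.1, ∃ I : Finset ι, ∀ y, (∀ j ∈ I, y j = x j) → y ∈ W.1 :=
    fun W => (hF.1 W W.2).2.imp fun _ hx =>
      ⟨hx, (hF.1 W W.2).1.exists_finset_forall_eqOn_mem hx⟩
  choose x _ I hI using hbox
  obtain ⟨i, hi⟩ := exists_forall_notMem_of_mk_lt I hlt
  obtain ⟨a, b, hab⟩ := exists_pair_ne (K i)
  obtain ⟨W, hW, hreap⟩ := hF.2 (Function.eval i ⁻¹' {a}) (Function.eval i ⁻¹' {b})
    (isClosed_singleton.preimage (continuous_apply i))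
    (isClosed_singleton.preimage (continuous_apply i))
    ((disjoint_singleton.mpr hab).preimage _)
  have hupdate : ∀ c, Function.update (x ⟨W, hW⟩) i c ∈ W := fun c =>
    hI ⟨W, hW⟩ _ fun j hj => Function.update_of_ne (ne_of_mem_of_not_mem hj (hi _)) _ _
  rcases hreap with hempty | hempty
  · exact hempty.subset ⟨hupdate a, Function.update_self ..⟩
  · exact hempty.subset ⟨hupdate b, Function.update_self ..⟩

theorem reapingNumber_product_ge_general {ι : Type u} [Infinite ι] (K : ι → Type u)
    [∀ i, TopologicalSpace (K i)] [∀ i, T2Space (K i)]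
    [∀ i, Nontrivial (K i)] :
    max (Cardinal.mk ι) (⨆ i, reapingNumber (K i)) ≤ reapingNumber (∀ i, K i) :=
  max_le (le_reapingNumber fun _ => mk_le_of_isReapingFamily_pi)
    (ciSup_le fun i => reapingNumber_le_of_isOpenMap (continuous_apply i) (isOpenMap_eval i))

/-- If `K` is the product of an infinite family of compact Hausdorff spaces each having
more than one point, then `𝔯(K) ≥ max(κ, sup_i 𝔯(K_i))`, where `κ` is the number of
factors. -/
theorem reapingNumber_product_ge {ι : Type u} [Infinite ι] (K : ι → Type u)
    [∀ i, TopologicalSpace (K i)] [∀ i, CompactSpace (K i)] [∀ i, T2Space (K i)]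
    [∀ i, Nontrivial (K i)] :
    max (Cardinal.mk ι) (⨆ i, reapingNumber (K i)) ≤ reapingNumber (∀ i, K i) :=
  reapingNumber_product_ge_general K
end

section
/- Let f : L → K be an irreducible continuous surjection between compact Hausdorff spaces (i.e., for every nonempty open A ⊆ L there is a nonempty open B ⊆ K with f⁻¹(B) ⊆ A). Then 𝔯(K) ≤ 𝔯(L). -/
universe u

lemma no_reaping_of_empty {X : Type u} [TopologicalSpace X] [IsEmpty X] :
    IsEmpty {F : Set (Set X) // IsReapingFamily F} := by
  constructor
  rintro ⟨F, h1, h2⟩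
  obtain ⟨W, hWF, -⟩ := h2 ∅ ∅ isClosed_empty isClosed_empty disjoint_bot_left
  obtain ⟨x, -⟩ := (h1 W hWF).2
  exact IsEmpty.elim ‹_› x

/-- If `f : L → K` is an irreducible continuous surjection between compact Hausdorff
spaces, then `𝔯(K) ≤ 𝔯(L)`. -/
theorem reapingNumber_le_of_irreducible {L K : Type u}
    [TopologicalSpace L] [CompactSpace L] [T2Space L]
    [TopologicalSpace K] [CompactSpace K] [T2Space K]
    (f : L → K) (hf : Continuous f) (hsurj : Function.Surjective f)
    (hirr : ∀ A : Set L, IsOpen A → A.Nonempty →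
      ∃ B : Set K, IsOpen B ∧ B.Nonempty ∧ f ⁻¹' B ⊆ A) :
    reapingNumber K ≤ reapingNumber L := by
  rcases isEmpty_or_nonempty L with hL | hL
  · have hK : IsEmpty K := ⟨fun k => (hsurj k).elim (fun l _ => hL.elim l)⟩
    haveI h1 := @no_reaping_of_empty K _ hK
    haveI h2 := @no_reaping_of_empty L _ hL
    rw [reapingNumber, reapingNumber, iInf, iInf, Set.range_eq_empty, Set.range_eq_empty]
  · have hNE : Nonempty {F : Set (Set L) // IsReapingFamily F} := by
      refine ⟨⟨{W | IsOpen W ∧ W.Nonempty}, fun W hW => hW, ?_⟩⟩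
      intro L₁ L₂ h₁ h₂ hd
      by_cases hu : L₁ = Set.univ
      · refine ⟨Set.univ, ⟨isOpen_univ, Set.univ_nonempty⟩, Or.inr ?_⟩
        rw [hu, Set.univ_disjoint] at hd
        simp [hd]
      · refine ⟨L₁ᶜ, ⟨h₁.isOpen_compl, Set.nonempty_compl.mpr hu⟩,
          Or.inl (Set.compl_inter_self L₁)⟩
    apply le_ciInf
    rintro ⟨F, hFopen, hFreap⟩
    have hch : ∀ W : F, ∃ B : Set K, IsOpen B ∧ B.Nonempty ∧ f ⁻¹' B ⊆ (W : Set L) :=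
      fun W => hirr W ((hFopen W W.2).1) ((hFopen W W.2).2)
    choose B hBopen hBne hBsub using hch
    have hG : IsReapingFamily (Set.range B) := by
      constructor
      · rintro _ ⟨W, rfl⟩; exact ⟨hBopen W, hBne W⟩
      · intro L₁ L₂ h₁ h₂ hd
        obtain ⟨W, hWF, hW⟩ := hFreap (f ⁻¹' L₁) (f ⁻¹' L₂) (h₁.preimage hf)
          (h₂.preimage hf) (hd.preimage f)
        refine ⟨B ⟨W, hWF⟩, ⟨⟨W, hWF⟩, rfl⟩, ?_⟩
        have key : ∀ S : Set K, W ∩ f ⁻¹' S = ∅ → B ⟨W, hWF⟩ ∩ S = ∅ := by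
          intro S hS
          rw [Set.eq_empty_iff_forall_notMem]
          rintro k ⟨hk1, hk2⟩
          obtain ⟨l, rfl⟩ := hsurj k
          have hlW : l ∈ W := hBsub ⟨W, hWF⟩ hk1
          have : l ∈ W ∩ f ⁻¹' S := ⟨hlW, hk2⟩
          rw [hS] at this
          exact this
        rcases hW with h | h
        · exact Or.inl (key _ h)
        · exact Or.inr (key _ h)
    calc reapingNumber K ≤ Cardinal.mk (Set.range B) := ciInf_le' _ (⟨Set.range B, hG⟩ : {F : Set (Set K) // IsReapingFamily F})
      _ ≤ Cardinal.mk F := Cardinal.mk_range_le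
end

section
/- For every compact Hausdorff space K, 𝔯(K) ≤ min{π_χ(x) : x ∈ K}, where π_χ(x) is the π-character of x, i.e., the minimal cardinality of a family ℬ of nonempty open sets such that every neighborhood of x contains a member of ℬ. -/
universe u

/-- The `π`-character of a point `x`: the minimal cardinality of a family of nonempty
open sets such that every neighborhood of `x` contains a member of the family. -/
noncomputable def piCharacter (K : Type u) [TopologicalSpace K] (x : K) : Cardinal.{u} :=
  ⨅ B : {B : Set (Set K) //
    (∀ W ∈ B, IsOpen W ∧ W.Nonempty) ∧
      ∀ U : Set K, IsOpen U → x ∈ U → ∃ W ∈ B, W ⊆ U}, Cardinal.mk B.1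

section

variable {K : Type u} [TopologicalSpace K]

/-- The point `x` misses one of two disjoint closed sets, and a member of the π-base inside
the complement of that set reaps the pair. -/
theorem isReapingFamily_of_piBase (x : K) {B : Set (Set K)}
    (hB : ∀ W ∈ B, IsOpen W ∧ W.Nonempty)
    (hx : ∀ U : Set K, IsOpen U → x ∈ U → ∃ W ∈ B, W ⊆ U) :
    IsReapingFamily B := by
  refine ⟨hB, fun L₁ L₂ hL₁ hL₂ hdisj => ?_⟩
  by_cases hx₁ : x ∈ L₁
  · obtain ⟨W, hWB, hW⟩ := hx L₂ᶜ hL₂.isOpen_compl (hdisj.notMem_of_mem_left hx₁)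
    exact ⟨W, hWB, Or.inr (Set.subset_compl_iff_disjoint_right.mp hW).inter_eq⟩
  · obtain ⟨W, hWB, hW⟩ := hx L₁ᶜ hL₁.isOpen_compl hx₁
    exact ⟨W, hWB, Or.inl (Set.subset_compl_iff_disjoint_right.mp hW).inter_eq⟩

theorem reapingNumber_le_piCharacter (x : K) : reapingNumber K ≤ piCharacter K x := by
  have : Nonempty {B : Set (Set K) // (∀ W ∈ B, IsOpen W ∧ W.Nonempty) ∧
      ∀ U : Set K, IsOpen U → x ∈ U → ∃ W ∈ B, W ⊆ U} :=
    ⟨⟨{U | IsOpen U ∧ U.Nonempty}, fun _ hW => hW, fun U hU hxU => ⟨U, ⟨hU, x, hxU⟩, le_rfl⟩⟩⟩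
  refine le_ciInf fun ⟨B, hB, hx⟩ => ?_
  exact ciInf_le' (fun F : {F : Set (Set K) // IsReapingFamily F} => Cardinal.mk F.1)
    ⟨B, isReapingFamily_of_piBase x hB hx⟩

end

theorem reapingNumber_le_min_piCharacter_general (K : Type u) [TopologicalSpace K]
    [Nonempty K] :
    reapingNumber K ≤ ⨅ x : K, piCharacter K x :=
  le_ciInf reapingNumber_le_piCharacter

/-- For every (nonempty) compact Hausdorff space `K`,
`𝔯(K) ≤ min {π_χ(x) : x ∈ K}`. -/
theorem reapingNumber_le_min_piCharacter (K : Type u) [TopologicalSpace K]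
    [CompactSpace K] [T2Space K] [Nonempty K] :
    reapingNumber K ≤ ⨅ x : K, piCharacter K x :=
  reapingNumber_le_min_piCharacter_general K
end

section
/- In an extremally disconnected compact Hausdorff space (one where the closure of every open set is open), every G_δ-point is isolated. -/
/-!
Suppose `x` is a non-isolated `G_δ`-point. By compactness `x` then has a countable neighbourhood
basis, and since the space is totally disconnected it may be taken to consist of clopen sets
`V 0 ⊇ V 1 ⊇ ⋯` with nonempty differences. The union `A` of the even differences
`V (2n) \ V (2n + 1)` accumulates at `x`, so by extremal disconnectedness its closure is an open
neighbourhood of `x`, hence contains some `V m`. But the odd difference `V (2m + 1) \ V (2m + 2)`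
is then a nonempty open subset of `closure A` disjoint from `A`.
-/

universe u

open Set Filter Topology Function

theorem Antitone.pairwise_disjoint_on_sdiff_succ {α : Type*} {V : ℕ → Set α} (hV : Antitone V) :
    Pairwise (Disjoint on fun n => V n \ V (n + 1)) :=
  (pairwise_disjoint_on _).2 fun _ _ hmn =>
    disjoint_left.2 fun _ hzm hzn => hzm.2 (hV (Nat.succ_le_of_lt hmn) hzn.1)

section Neighbourhoods

variable {X : Type*} [TopologicalSpace X] {x : X}

theorem nhds_eq_iInf_principal_of_iInter_subset [CompactSpace X] {ι : Sort*} {K : ι → Set X}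
    (hclosed : ∀ i, IsClosed (K i)) (hmem : ∀ i, K i ∈ 𝓝 x) (hinter : ⋂ i, K i ⊆ {x}) :
    𝓝 x = ⨅ i, 𝓟 (K i) := by
  refine le_antisymm (le_iInf fun i => le_principal_iff.2 (hmem i)) ?_
  refine isCompact_univ.le_nhds_of_unique_clusterPt univ_mem fun y _ hy => hinter ?_
  exact mem_iInter.2 fun i =>
    (hclosed i).closure_eq ▸ hy.mem_closure_of_mem _ (mem_iInf_of_mem i (mem_principal_self _))

theorem IsGδ.isCountablyGenerated_nhds [CompactSpace X] [RegularSpace X] (hx : IsGδ ({x} : Set X)) :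
    (𝓝 x).IsCountablyGenerated := by
  obtain ⟨U, hUopen, hU⟩ := isGδ_iff_eq_iInter_nat.1 hx
  have hxU : ∀ n, U n ∈ 𝓝 x := fun n =>
    (hUopen n).mem_nhds (mem_iInter.1 (hU ▸ mem_singleton x) n)
  choose K hKx hKclosed hKU using fun n => exists_mem_nhds_isClosed_subset (hxU n)
  rw [nhds_eq_iInf_principal_of_iInter_subset hKclosed hKx (hU ▸ iInter_mono hKU)]
  infer_instance

theorem Filter.HasAntitoneBasis.exists_subbasis_sdiff_succ_nonempty [T1Space X] [(𝓝[≠] x).NeBot]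
    {V : ℕ → Set X} (hV : (𝓝 x).HasAntitoneBasis V) :
    ∃ φ : ℕ → ℕ, (𝓝 x).HasAntitoneBasis (V ∘ φ) ∧ ∀ n, (V (φ n) \ V (φ (n + 1))).Nonempty := by
  have hr : ∀ m, ∀ᶠ n in atTop, (V m \ V n).Nonempty := by
    intro m
    obtain ⟨y, hyV, hyx⟩ := nonempty_of_mem (sdiff_mem_nhdsWithin_compl (hV.mem m) {x})
    filter_upwards [hV.eventually_subset (compl_singleton_mem_nhds (Ne.symm hyx))] with n hn
    exact ⟨y, hyV, fun hy => hn hy rfl⟩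
  obtain ⟨φ, -, hφ, hbasis⟩ := hV.subbasis_with_rel hr
  exact ⟨φ, hbasis, fun n => hφ n.lt_succ_self⟩

theorem ExtremallyDisconnected.not_forall_sdiff_succ_nonempty [ExtremallyDisconnected X]
    {V : ℕ → Set X} (hV : (𝓝 x).HasAntitoneBasis V) (hclopen : ∀ n, IsClopen (V n)) :
    ¬∀ n, (V n \ V (n + 1)).Nonempty := by
  intro hne
  set D : ℕ → Set X := fun n => V n \ V (n + 1)
  have hDopen : ∀ n, IsOpen (D n) := fun n => (hclopen n).2.sdiff (hclopen (n + 1)).1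
  set A := ⋃ n, D (2 * n)
  have hAopen : IsOpen A := isOpen_iUnion fun n => hDopen (2 * n)
  have hxA : x ∈ closure A := by
    refine mem_closure_iff_nhds.2 fun t ht => ?_
    obtain ⟨n, hn⟩ := hV.mem_iff.1 ht
    obtain ⟨z, hz⟩ := hne (2 * n)
    exact ⟨z, hn (hV.antitone (by omega) hz.1), mem_iUnion_of_mem n hz⟩
  obtain ⟨m, hm⟩ := hV.mem_iff.1 ((open_closure A hAopen).mem_nhds hxA)
  obtain ⟨z, hz⟩ := hne (2 * m + 1)
  obtain ⟨w, hwD, hwA⟩ := mem_closure_iff.1 (hm (hV.antitone (by omega) hz.1)) _ (hDopen _) hz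
  obtain ⟨k, hwk⟩ := mem_iUnion.1 hwA
  exact disjoint_left.1 (hV.antitone.pairwise_disjoint_on_sdiff_succ (by omega : 2 * m + 1 ≠ 2 * k)) hwD hwk

end Neighbourhoods

/-- In an extremally disconnected compact Hausdorff space, every `G_δ`-point is
isolated. -/
theorem isolated_of_Gdelta_of_extremallyDisconnected (K : Type u) [TopologicalSpace K]
    [CompactSpace K] [T2Space K] [ExtremallyDisconnected K]
    (x : K) (hx : IsGδ ({x} : Set K)) : IsOpen ({x} : Set K) := by
  by_contra hiso
  have : (𝓝[≠] x).NeBot := ⟨mt (isOpen_singleton_iff_punctured_nhds x).2 hiso⟩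
  have := hx.isCountablyGenerated_nhds
  obtain ⟨C, hC, hCbasis⟩ := (nhds_basis_clopen x).exists_antitone_subbasis
  obtain ⟨φ, hbasis, hne⟩ := hCbasis.exists_subbasis_sdiff_succ_nonempty
  exact ExtremallyDisconnected.not_forall_sdiff_succ_nonempty hbasis (fun n => (hC (φ n)).2) hne
end

section
/- Let K be a compact Hausdorff space such that 𝔯(K) < ω. Then K has an isolated point and 𝔯(K) = 1. -/
universe u

lemma isolated_of_finite_open {K : Type u} [TopologicalSpace K] [T1Space K]
    {W : Set K} (hW : IsOpen W) (hfin : W.Finite) (hne : W.Nonempty) :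
    ∃ x : K, IsOpen ({x} : Set K) := by
  obtain ⟨x, hx⟩ := hne
  refine ⟨x, ?_⟩
  have hcl : IsClosed (W \ {x}) := (hfin.subset Set.diff_subset).isClosed
  have : ({x} : Set K) = W ∩ (W \ {x})ᶜ := by
    ext y
    simp only [Set.mem_singleton_iff, Set.mem_inter_iff, Set.mem_compl_iff,
      Set.mem_diff, not_and, not_not]
    constructor
    · rintro rfl; exact ⟨hx, fun _ => rfl⟩
    · rintro ⟨hyW, h2⟩; exact h2 hyW
  rw [this]
  exact hW.inter hcl.isOpen_compl

lemma pick_lemma {K : Type u} [TopologicalSpace K] [T1Space K]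
    (hni : ¬ ∃ x : K, IsOpen ({x} : Set K))
    {W : Set K} (hW : IsOpen W) (hne : W.Nonempty) (S : Set K) (hS : S.Finite) :
    (W \ S).Nonempty := by
  rw [Set.nonempty_iff_ne_empty]
  intro hemp
  have hsub : W ⊆ S := by
    intro x hx
    by_contra hxS
    exact (Set.eq_empty_iff_forall_notMem.mp hemp x) ⟨hx, hxS⟩
  exact hni (isolated_of_finite_open hW (hS.subset hsub) hne)

lemma exists_meets {K : Type u} [TopologicalSpace K] [T1Space K]
    (hni : ¬ ∃ x : K, IsOpen ({x} : Set K))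
    {F : Set (Set K)} (hfin : F.Finite) (hop : ∀ W ∈ F, IsOpen W ∧ W.Nonempty) :
    ∃ L₁ L₂ : Set K, L₁.Finite ∧ L₂.Finite ∧ Disjoint L₁ L₂ ∧
      ∀ W ∈ F, (W ∩ L₁).Nonempty ∧ (W ∩ L₂).Nonempty := by
  revert hop
  refine Set.Finite.induction_on F hfin ?_ ?_
  · exact fun _ => ⟨∅, ∅, Set.finite_empty, Set.finite_empty, disjoint_bot_left,
      fun W hW => absurd hW (Set.notMem_empty W)⟩
  · rintro W s hWs hsfin ih hop
    obtain ⟨L₁, L₂, hL₁, hL₂, hdisj, hmeet⟩ :=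
      ih (fun V hV => hop V (Set.mem_insert_of_mem _ hV))
    obtain ⟨hWop, hWne⟩ := hop W (Set.mem_insert _ _)
    obtain ⟨x, hxW, hxS⟩ := pick_lemma hni hWop hWne (L₁ ∪ L₂) (hL₁.union hL₂)
    obtain ⟨y, hyW, hyS⟩ := pick_lemma hni hWop hWne (L₁ ∪ L₂ ∪ {x})
      ((hL₁.union hL₂).union (Set.finite_singleton x))
    refine ⟨insert x L₁, insert y L₂, hL₁.insert x, hL₂.insert y, ?_, ?_⟩
    · rw [Set.disjoint_iff_forall_ne]
      rintro a ha b hb rfl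
      rcases Set.mem_insert_iff.mp ha with rfl | haL₁
      · rcases Set.mem_insert_iff.mp hb with rfl | hbL₂
        · exact hyS (Set.mem_union_right _ rfl)
        · exact hxS (Set.mem_union_right _ hbL₂)
      · rcases Set.mem_insert_iff.mp hb with rfl | hbL₂
        · exact hyS (Set.mem_union_left _ (Set.mem_union_left _ haL₁))
        · exact Set.disjoint_iff_forall_ne.mp hdisj haL₁ hbL₂ rfl
    · intro V hV
      rcases Set.mem_insert_iff.mp hV with rfl | hVs
      · exact ⟨⟨x, hxW, Set.mem_insert _ _⟩, ⟨y, hyW, Set.mem_insert _ _⟩⟩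
      · obtain ⟨h1, h2⟩ := hmeet V hVs
        exact ⟨h1.mono (Set.inter_subset_inter_right _ (Set.subset_insert _ _)),
          h2.mono (Set.inter_subset_inter_right _ (Set.subset_insert _ _))⟩

lemma univ_reaping {K : Type u} [TopologicalSpace K] [Nonempty K] :
    IsReapingFamily {W : Set K | IsOpen W ∧ W.Nonempty} := by
  refine ⟨fun W hW => hW, fun L₁ L₂ hc1 _ hd => ?_⟩
  by_cases hL : L₁ = Set.univ
  · refine ⟨Set.univ, ⟨isOpen_univ, Set.univ_nonempty⟩, Or.inr ?_⟩
    have : L₂ = ∅ := by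
      rw [Set.eq_empty_iff_forall_notMem]
      exact fun x hx => Set.disjoint_right.mp hd hx (hL ▸ Set.mem_univ x)
    simp [this]
  · refine ⟨L₁ᶜ, ⟨hc1.isOpen_compl, ?_⟩, Or.inl ?_⟩
    · rw [Set.nonempty_compl]; exact hL
    · rw [Set.eq_empty_iff_forall_notMem]; rintro x ⟨h1, h2⟩; exact h1 h2

/-- If the reaping number of a (nonempty) compact Hausdorff space is finite, then the
space has an isolated point and its reaping number equals `1`. -/
theorem isolated_point_of_finite_reapingNumber (K : Type u) [TopologicalSpace K]
    [CompactSpace K] [T2Space K] [Nonempty K]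
    (h : reapingNumber K < Cardinal.aleph0) :
    (∃ x : K, IsOpen ({x} : Set K)) ∧ reapingNumber K = 1 := by
  have : Nonempty {F : Set (Set K) // IsReapingFamily F} := ⟨⟨_, univ_reaping⟩⟩
  obtain ⟨⟨F, hF⟩, hFcard⟩ := exists_lt_of_ciInf_lt h
  have hFfin : F.Finite := by
    rwa [Cardinal.lt_aleph0_iff_set_finite] at hFcard
  have hiso : ∃ x : K, IsOpen ({x} : Set K) := by
    by_contra hni
    obtain ⟨L₁, L₂, hL₁, hL₂, hdisj, hmeet⟩ := exists_meets hni hFfin hF.1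
    obtain ⟨W, hWF, hor⟩ := hF.2 L₁ L₂ hL₁.isClosed hL₂.isClosed hdisj
    obtain ⟨h1, h2⟩ := hmeet W hWF
    rcases hor with he | he
    · rw [he] at h1; exact Set.not_nonempty_empty h1
    · rw [he] at h2; exact Set.not_nonempty_empty h2
  obtain ⟨x, hx⟩ := hiso
  have hF₀ : IsReapingFamily ({{x}} : Set (Set K)) := by
    constructor
    · rintro W hW
      rw [Set.mem_singleton_iff] at hW
      exact hW ▸ ⟨hx, ⟨x, rfl⟩⟩
    · intro L₁ L₂ _ _ hd
      refine ⟨{x}, rfl, ?_⟩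
      by_cases hx1 : x ∈ L₁
      · right
        rw [Set.eq_empty_iff_forall_notMem]
        rintro y ⟨hy1, hy2⟩
        rw [Set.mem_singleton_iff] at hy1
        exact Set.disjoint_left.mp hd hx1 (hy1 ▸ hy2)
      · left
        rw [Set.eq_empty_iff_forall_notMem]
        rintro y ⟨hy1, hy2⟩
        rw [Set.mem_singleton_iff] at hy1
        exact hx1 (hy1 ▸ hy2)
  refine ⟨⟨x, hx⟩, le_antisymm ?_ ?_⟩
  · calc reapingNumber K ≤ Cardinal.mk ({{x}} : Set (Set K)) :=
          ciInf_le' _ (⟨_, hF₀⟩ : {F : Set (Set K) // IsReapingFamily F})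
      _ = 1 := Cardinal.mk_singleton _
  · have : Nonempty {F : Set (Set K) // IsReapingFamily F} := ⟨⟨_, hF₀⟩⟩
    refine le_ciInf fun G => ?_
    obtain ⟨W, hWG, -⟩ := G.2.2 ∅ ∅ isClosed_empty isClosed_empty disjoint_bot_left
    exact Cardinal.one_le_iff_ne_zero.mpr (Cardinal.mk_ne_zero_iff.mpr ⟨W, hWG⟩)
end
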